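/- Let T ≥ 1 and let A be the 4×3 matrix with rows (1,1,0), (0,0,1), (1,0,0), (0,1,1), and let A^{⊗T} be its T-fold Kronecker power. If ν, ν′ ∈ ℝ^{3^T} are componentwise nonnegative with entries summing to 1 and A^{⊗T} ν = A^{⊗T} ν′, then ν = ν′. -/
import Mathlib


open Matrix

noncomputable section

/-- Iterated Kronecker product of a family of matrices, in product-index form:
rows and columns are indexed by tuples of indices, which correspond to the rows
and columns of the iterated Kronecker product via the lexicographic bijection. -/
def kronPi {T : ℕ} {R C : Fin T → Type*} (A : ∀ t, Matrix (R t) (C t) ℝ) :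
    Matrix (∀ t, R t) (∀ t, C t) ℝ :=
  Matrix.of fun r c => ∏ t, A t (r t) (c t)

/-- The `V`-representation matrix of the simple setup (two intersecting budgets,
three rational types); rows `0,1` form menu `1` and rows `2,3` form menu `2`. -/
def Asimple : Matrix (Fin 4) (Fin 3) ℝ :=
  !![1, 1, 0; 0, 0, 1; 1, 0, 0; 0, 1, 1]

/-- A left inverse of `Asimple`. -/
def Bsimple : Matrix (Fin 3) (Fin 4) ℝ :=
  !![0, 0, 1, 0; 1, 0, -1, 0; 0, 1, 0, 0]

lemma Bsimple_mul_Asimple : Bsimple * Asimple = 1 := by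
  ext i j
  fin_cases i <;> fin_cases j <;>
    norm_num [Bsimple, Asimple, Matrix.mul_apply, Fin.sum_univ_succ, Matrix.one_apply, Fin.ext_iff]

lemma kronPi_mul {T : ℕ} {R M C : Fin T → Type*} [∀ t, Fintype (M t)]
    (A : ∀ t, Matrix (R t) (M t) ℝ) (B : ∀ t, Matrix (M t) (C t) ℝ) :
    kronPi A * kronPi B = kronPi (fun t => A t * B t) := by
  ext r c
  simp only [kronPi, Matrix.mul_apply, Matrix.of_apply, Fintype.prod_sum]
  exact Finset.sum_congr rfl fun x _ => (Finset.prod_mul_distrib).symm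

lemma kronPi_one {T : ℕ} {R : Fin T → Type*} [∀ t, Fintype (R t)] [∀ t, DecidableEq (R t)] :
    kronPi (fun t => (1 : Matrix (R t) (R t) ℝ)) = 1 := by
  ext r c
  simp only [kronPi, Matrix.of_apply, Matrix.one_apply]
  by_cases h : r = c
  · subst h; simp
  · rw [if_neg h]
    obtain ⟨t, ht⟩ := Function.ne_iff.mp h
    exact Finset.prod_eq_zero (Finset.mem_univ t) (by simp [ht])

/-- uniqueness of the mixing distribution in the simple setup: two
probability vectors `ν, ν'` with `A^{⊗T} ν = A^{⊗T} ν'` coincide. -/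
theorem drum_simple_setup_unique_mixture
    (T : ℕ) (hT : 1 ≤ T) (ν ν' : (Fin T → Fin 3) → ℝ)
    (hν0 : 0 ≤ ν) (hν'0 : 0 ≤ ν')
    (hν1 : ∑ c, ν c = 1) (hν'1 : ∑ c, ν' c = 1)
    (h : (kronPi fun _ : Fin T => Asimple).mulVec ν =
      (kronPi fun _ : Fin T => Asimple).mulVec ν') :
    ν = ν' := by
  have key := congrArg (fun w => (kronPi fun _ : Fin T => Bsimple).mulVec w) h
  simp only [Matrix.mulVec_mulVec] at key
  rwa [kronPi_mul, show (fun _ : Fin T => Bsimple * Asimple) = fun _ => 1 from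
    funext fun _ => Bsimple_mul_Asimple, kronPi_one, Matrix.one_mulVec,
    Matrix.one_mulVec] at key

end
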